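/- (Sequential regression representation of the g-computation formula.) Define θ = Σ_{(ā_τ, l̄_τ)} E[Y ∣ A_τ = a_τ^d, H_τ = h_τ^d] · Π_{k=1}^τ P(A_k = a_k, L_k = l_k ∣ A_{k−1} = a_{k−1}^d, H_{k−1} = h_{k−1}^d), where the sum is over all (ā_τ, l̄_τ), the intervened values are defined recursively by h_t^d = (l_1, a_1^d, …, a_{t−1}^d, l_t) and a_t^d = d_t(ā_t, h_t^d), and the k = 1 factor is P(A_1 = a_1, L_1 = l_1). Then θ = E[q_1(A_1, H_1)], where q_1 is the first function produced by the sequential regression recursion. -/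

import Mathlib

open MeasureTheory Finset

namespace GLMTP

variable {τ : ℕ}

/-- Augmented natural-treatment history: one treatment value for each time index `< tp`
(0-based; the paper's `s̄_t` corresponds to `tp = t`). -/
abbrev SbarN (𝓐 : Fin τ → Type) (tp : ℕ) : Type :=
  ∀ s : {s : Fin τ // s.val < tp}, 𝓐 s.1

/-- Observed history `H_t = (L_1, A_1, …, A_{t-1}, L_t)`: covariates up to (and including)
time `t` and treatments strictly before time `t`. -/
abbrev Hist (𝓐 𝓛 : Fin τ → Type) (t : Fin τ) : Type :=
  (∀ s : {s : Fin τ // s ≤ t}, 𝓛 s.1) × (∀ s : {s : Fin τ // s < t}, 𝓐 s.1)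

/-- A generalized longitudinal modified treatment policy: at each time `t` it maps the
history of natural treatment values `(a_1, …, a_t)` and the history `h_t` to a treatment. -/
abbrev Policy (𝓐 𝓛 : Fin τ → Type) : Type :=
  ∀ t : Fin τ, SbarN 𝓐 (t.val + 1) → Hist 𝓐 𝓛 t → 𝓐 t

variable {𝓐 𝓛 : Fin τ → Type}

/-- The empty augmented history `s̄_0`. -/
def emptySbar (𝓐 : Fin τ → Type) : SbarN 𝓐 0 :=
  fun s => absurd s.2 (Nat.not_lt_zero _)

def restrictSb {tp tp' : ℕ} (h : tp' ≤ tp) (sb : SbarN 𝓐 tp) : SbarN 𝓐 tp' :=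
  fun s => sb ⟨s.1, lt_of_lt_of_le s.2 h⟩

/-- Append a treatment value at time `t` to an augmented history `s̄_{t-1}`. -/
def snoc {t : Fin τ} (sb : SbarN 𝓐 t.val) (a : 𝓐 t) : SbarN 𝓐 (t.val + 1) :=
  fun s =>
    if h : s.1 = t then cast (congrArg 𝓐 h).symm a
    else sb ⟨s.1, lt_of_le_of_ne (Nat.lt_succ_iff.mp s.2) (fun hv => h (Fin.ext hv))⟩

/-- Extension of an augmented history: treatment values at times `tp ≤ u ≤ k` (0-based),
i.e. the summation variables `s_{t+1}, …, s_k` of the paper. -/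
abbrev Ext (𝓐 : Fin τ → Type) (tp : ℕ) (k : Fin τ) : Type :=
  ∀ s : {s : Fin τ // tp ≤ s.val ∧ s.val ≤ k.val}, 𝓐 s.1

def mergeExt {tp : ℕ} {k : Fin τ} (sb : SbarN 𝓐 tp) (e : Ext 𝓐 tp k) :
    SbarN 𝓐 (k.val + 1) :=
  fun s =>
    if h : s.1.val < tp then sb ⟨s.1, h⟩
    else e ⟨s.1, ⟨not_lt.mp h, Nat.lt_succ_iff.mp s.2⟩⟩

/-- The observed data structure `Z = (L_1, A_1, …, L_τ, A_τ, Y)` with its law `μ`. -/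
structure Model (𝓐 𝓛 : Fin τ → Type) (Ω : Type) [MeasurableSpace Ω] where
  μ : Measure Ω
  L : ∀ t : Fin τ, Ω → 𝓛 t
  A : ∀ t : Fin τ, Ω → 𝓐 t
  Y : Ω → ℝ

variable {Ω : Type} [MeasurableSpace Ω]

/-- The observed history process `ω ↦ H_t(ω)`. -/
def Model.Hproc (M : Model 𝓐 𝓛 Ω) (t : Fin τ) (ω : Ω) : Hist 𝓐 𝓛 t :=
  (fun s => M.L s.1 ω, fun s => M.A s.1 ω)

/-- The event `{H_t = h}`. -/
def Model.histEvent (M : Model 𝓐 𝓛 Ω) (t : Fin τ) (h : Hist 𝓐 𝓛 t) : Set Ω :=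
  {ω | M.Hproc t ω = h}

/-- The event `{A_t = a, H_t = h}`. -/
def Model.condEvent (M : Model 𝓐 𝓛 Ω) (t : Fin τ) (a : 𝓐 t) (h : Hist 𝓐 𝓛 t) : Set Ω :=
  {ω | M.A t ω = a} ∩ M.histEvent t h

/-- Conditional expectation given an event, defined as a ratio. -/
noncomputable def condExpOn (μ : Measure Ω) (S : Set Ω) (X : Ω → ℝ) : ℝ :=
  (∫ ω in S, X ω ∂μ) / (μ S).toReal

/-- The true treatment mechanism `g_t(a ∣ h) = P(A_t = a ∣ H_t = h)`. -/
noncomputable def Model.g (M : Model 𝓐 𝓛 Ω) (t : Fin τ) (a : 𝓐 t) (h : Hist 𝓐 𝓛 t) : ℝ :=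
  (M.μ (M.condEvent t a h)).toReal / (M.μ (M.histEvent t h)).toReal

/-- Full positivity: `P(A_t = a, H_t = h) > 0` for every `t`, `a`, `h`. -/
def Model.Positivity (M : Model 𝓐 𝓛 Ω) : Prop :=
  ∀ (t : Fin τ) (a : 𝓐 t) (h : Hist 𝓐 𝓛 t), 0 < M.μ (M.condEvent t a h)

/-- Measurability of the observed variables. -/
def Model.Meas (M : Model 𝓐 𝓛 Ω) : Prop :=
  (∀ (t : Fin τ) (a : 𝓐 t), MeasurableSet {ω | M.A t ω = a}) ∧
  (∀ (t : Fin τ) (l : 𝓛 t), MeasurableSet {ω | M.L t ω = l}) ∧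
  Measurable M.Y

/-- `q_t` obtained from `m_t`:
`q_t(s̄_{t-1}, a_t, h_t) = m_t((s̄_{t-1},a_t), d_t((s̄_{t-1},a_t), h_t), h_t)`. -/
def qOf (d : Policy 𝓐 𝓛)
    (m : ∀ t : Fin τ, SbarN 𝓐 (t.val + 1) → 𝓐 t → Hist 𝓐 𝓛 t → ℝ)
    (t : Fin τ) (sb : SbarN 𝓐 t.val) (a : 𝓐 t) (h : Hist 𝓐 𝓛 t) : ℝ :=
  m t (snoc sb a) (d t (snoc sb a) h) h

/-- `ω ↦ q_{k+1}(s̄_k, A_{k+1}(ω), H_{k+1}(ω))`, with the convention `q_{τ+1} := Y`. -/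
def Model.qNext (M : Model 𝓐 𝓛 Ω)
    (q : ∀ t : Fin τ, SbarN 𝓐 t.val → 𝓐 t → Hist 𝓐 𝓛 t → ℝ)
    (k : Fin τ) (sb : SbarN 𝓐 (k.val + 1)) (ω : Ω) : ℝ :=
  if h : k.val + 1 < τ then
    q ⟨k.val + 1, h⟩ sb (M.A ⟨k.val + 1, h⟩ ω) (M.Hproc ⟨k.val + 1, h⟩ ω)
  else M.Y ω

/-- `m` is the (true) sequential-regression family for the policy `d`:
`m_t(s̄_t, a_t, h_t) = E[q_{t+1}(s̄_t, A_{t+1}, H_{t+1}) ∣ A_t = a_t, H_t = h_t]`,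
with `q_{τ+1} = Y` (so at `t = τ` this reads `m_τ(a_τ,h_τ) = E[Y ∣ A_τ = a_τ, H_τ = h_τ]`,
extended independently of `s̄_τ`). -/
def IsSeqReg (M : Model 𝓐 𝓛 Ω) (d : Policy 𝓐 𝓛)
    (m : ∀ t : Fin τ, SbarN 𝓐 (t.val + 1) → 𝓐 t → Hist 𝓐 𝓛 t → ℝ) : Prop :=
  ∀ (t : Fin τ) (sb : SbarN 𝓐 (t.val + 1)) (a : 𝓐 t) (h : Hist 𝓐 𝓛 t),
    m t sb a h = condExpOn M.μ (M.condEvent t a h) (M.qNext (qOf d m) t sb)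

/-- The parameter `θ = E[q_1(A_1, H_1)]`. -/
noncomputable def theta (hτ : 0 < τ) (M : Model 𝓐 𝓛 Ω) (d : Policy 𝓐 𝓛)
    (m : ∀ t : Fin τ, SbarN 𝓐 (t.val + 1) → 𝓐 t → Hist 𝓐 𝓛 t → ℝ) : ℝ :=
  ∫ ω, qOf d m ⟨0, hτ⟩ (emptySbar 𝓐) (M.A ⟨0, hτ⟩ ω) (M.Hproc ⟨0, hτ⟩ ω) ∂M.μ

variable [∀ t, DecidableEq (𝓐 t)] [∀ t, Fintype (𝓐 t)]

/-- Indicator `D_{t,k}(s̄_k)`: all treatments at times `tp ≤ u ≤ k` (0-based) follow the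
policy applied to the augmented history. -/
noncomputable def Dind (M : Model 𝓐 𝓛 Ω) (d : Policy 𝓐 𝓛) (tp : ℕ) (k : Fin τ)
    (sb : SbarN 𝓐 (k.val + 1)) (ω : Ω) : ℝ :=
  ∏ u : Fin τ,
    if hu : tp ≤ u.val ∧ u.val ≤ k.val then
      (if M.A u ω = d u (restrictSb (Nat.succ_le_succ hu.2) sb) (M.Hproc u ω) then 1 else 0)
    else 1

/-- Density-ratio weight `∏_{u} g'_u(s_u ∣ H_u)/g'_u(A_u ∣ H_u)` over times `tp ≤ u ≤ k`. -/
noncomputable def weight (M : Model 𝓐 𝓛 Ω) (g' : ∀ t : Fin τ, 𝓐 t → Hist 𝓐 𝓛 t → ℝ)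
    (tp : ℕ) (k : Fin τ) (sb : SbarN 𝓐 (k.val + 1)) (ω : Ω) : ℝ :=
  ∏ u : Fin τ,
    if hu : tp ≤ u.val ∧ u.val ≤ k.val then
      g' u (sb ⟨u, Nat.lt_succ_of_le hu.2⟩) (M.Hproc u ω) / g' u (M.A u ω) (M.Hproc u ω)
    else 1

/-- The pseudo-outcome `φ_{t+1}(s̄_t, Z; η')`; here `tp` is the paper's `t` (so times are
0-based internally: the paper's time `u` is the index `u - 1`). -/
noncomputable def phi (M : Model 𝓐 𝓛 Ω) (d : Policy 𝓐 𝓛)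
    (g' : ∀ t : Fin τ, 𝓐 t → Hist 𝓐 𝓛 t → ℝ)
    (m' : ∀ t : Fin τ, SbarN 𝓐 (t.val + 1) → 𝓐 t → Hist 𝓐 𝓛 t → ℝ)
    (tp : ℕ) (sb : SbarN 𝓐 tp) (ω : Ω) : ℝ :=
  (∑ k : Fin τ,
    if tp ≤ k.val then
      ∑ e : Ext 𝓐 tp k,
        Dind M d tp k (mergeExt sb e) ω * weight M g' tp k (mergeExt sb e) ω *
          (M.qNext (qOf d m') k (mergeExt sb e) ω -
            m' k (mergeExt sb e) (M.A k ω) (M.Hproc k ω))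
    else 0) +
  (if h : tp < τ then
      qOf d m' ⟨tp, h⟩ sb (M.A ⟨tp, h⟩ ω) (M.Hproc ⟨tp, h⟩ ω)
    else M.Y ω)

/-- The remainder `Rem_t(s̄_t, a_t, h_t; η')` of Theorem 2, as a function of the conditioning
event `S` (`S = {A_t = a_t, H_t = h_t}`, or `S = univ` for `t = 0`). -/
noncomputable def rem (M : Model 𝓐 𝓛 Ω) (d : Policy 𝓐 𝓛)
    (g' : ∀ t : Fin τ, 𝓐 t → Hist 𝓐 𝓛 t → ℝ)
    (m' mtrue : ∀ t : Fin τ, SbarN 𝓐 (t.val + 1) → 𝓐 t → Hist 𝓐 𝓛 t → ℝ)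
    (tp : ℕ) (sb : SbarN 𝓐 tp) (S : Set Ω) : ℝ :=
  ∑ k : Fin τ,
    if tp ≤ k.val then
      ∑ e : Ext 𝓐 tp k,
        condExpOn M.μ S (fun ω =>
          Dind M d tp k (mergeExt sb e) ω *
          (∏ r : Fin τ,
            if hr : tp ≤ r.val ∧ r.val < k.val then
              g' r (mergeExt sb e ⟨r, Nat.lt_succ_of_lt hr.2⟩) (M.Hproc r ω) /
                g' r (M.A r ω) (M.Hproc r ω)
            else 1) *
          (M.g k (mergeExt sb e ⟨k, Nat.lt_succ_self _⟩) (M.Hproc k ω) /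
              M.g k (M.A k ω) (M.Hproc k ω) -
            g' k (mergeExt sb e ⟨k, Nat.lt_succ_self _⟩) (M.Hproc k ω) /
              g' k (M.A k ω) (M.Hproc k ω)) *
          (m' k (mergeExt sb e) (M.A k ω) (M.Hproc k ω) -
            mtrue k (mergeExt sb e) (M.A k ω) (M.Hproc k ω)))
    else 0

/-- The intervened treatment values `a_t^d = d_t(ā_t, h_t^d)`, defined recursively from a
full natural-treatment trajectory `ā` and a full covariate trajectory `l̄`, where
`h_t^d = (l_1, a_1^d, …, a_{t-1}^d, l_t)`. -/
def adSeq (d : Policy 𝓐 𝓛) (abar : ∀ s : Fin τ, 𝓐 s) (lbar : ∀ s : Fin τ, 𝓛 s)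
    (t : Fin τ) : 𝓐 t :=
  d t (fun s => abar s.1) (fun s => lbar s.1, fun s => adSeq d abar lbar s.1)
termination_by t.val
decreasing_by exact s.2

/-- The g-computation formula
`θ = Σ_{(ā_τ, l̄_τ)} E[Y ∣ A_τ = a_τ^d, H_τ = h_τ^d] Π_{k=1}^τ P(A_k = a_k, L_k = l_k ∣ A_{k-1} = a_{k-1}^d, H_{k-1} = h_{k-1}^d)`,
with the `k = 1` factor being `P(A_1 = a_1, L_1 = l_1)` (the conditioning event at `k = 1`
is the whole space, which has probability one). -/
noncomputable def gcomp [∀ t, Fintype (𝓛 t)] (M : Model 𝓐 𝓛 Ω) (d : Policy 𝓐 𝓛) : ℝ :=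
  ∑ abar : ∀ s : Fin τ, 𝓐 s, ∑ lbar : ∀ s : Fin τ, 𝓛 s,
    condExpOn M.μ
      {ω | (∀ s : Fin τ, M.L s ω = lbar s) ∧ (∀ s : Fin τ, M.A s ω = adSeq d abar lbar s)}
      M.Y *
    ∏ k : Fin τ,
      (M.μ {ω | (∀ s : Fin τ, s < k → (M.L s ω = lbar s ∧ M.A s ω = adSeq d abar lbar s)) ∧
            M.A k ω = abar k ∧ M.L k ω = lbar k}).toReal /
      (M.μ {ω | ∀ s : Fin τ, s < k →
            (M.L s ω = lbar s ∧ M.A s ω = adSeq d abar lbar s)}).toReal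

section SeqRegProof

open scoped Classical

set_option linter.unusedSectionVars false

variable [∀ t, Fintype (𝓛 t)]

lemma adSeq_congr (d : Policy 𝓐 𝓛) (abar abar' : ∀ s : Fin τ, 𝓐 s)
    (lbar lbar' : ∀ s : Fin τ, 𝓛 s) (t : Fin τ)
    (hA : ∀ s : Fin τ, s ≤ t → abar s = abar' s)
    (hL : ∀ s : Fin τ, s ≤ t → lbar s = lbar' s) :
    adSeq d abar lbar t = adSeq d abar' lbar' t := by
  have h1 : (fun s : {s : Fin τ // s.val < t.val + 1} => abar s.1)
      = (fun s : {s : Fin τ // s.val < t.val + 1} => abar' s.1) := by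
    funext s
    exact hA s.1 (Nat.lt_succ_iff.mp s.2)
  have h2 : (fun s : {s : Fin τ // s ≤ t} => lbar s.1)
      = (fun s : {s : Fin τ // s ≤ t} => lbar' s.1) := by
    funext s; exact hL s.1 s.2
  have h3 : (fun s : {s : Fin τ // s < t} => adSeq d abar lbar s.1)
      = (fun s : {s : Fin τ // s < t} => adSeq d abar' lbar' s.1) := by
    funext s
    exact adSeq_congr d abar abar' lbar lbar' s.1
      (fun u hu => hA u (le_trans hu (le_of_lt s.2)))
      (fun u hu => hL u (le_trans hu (le_of_lt s.2)))
  rw [adSeq, adSeq, h1, h2, h3]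
termination_by t.val
decreasing_by exact s.2

/-- The natural-treatment history extracted from a full trajectory. -/
def sbOf (abar : ∀ s : Fin τ, 𝓐 s) (tp : ℕ) : SbarN 𝓐 tp := fun s => abar s.1

/-- The intervened history `h_t^d`. -/
def hdOf (d : Policy 𝓐 𝓛) (abar : ∀ s : Fin τ, 𝓐 s) (lbar : ∀ s : Fin τ, 𝓛 s)
    (t : Fin τ) : Hist 𝓐 𝓛 t :=
  (fun s => lbar s.1, fun s => adSeq d abar lbar s.1)

lemma adSeq_eq (d : Policy 𝓐 𝓛) (abar : ∀ s : Fin τ, 𝓐 s) (lbar : ∀ s : Fin τ, 𝓛 s)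
    (t : Fin τ) :
    adSeq d abar lbar t = d t (sbOf abar (t.val + 1)) (hdOf d abar lbar t) := by
  rw [adSeq]; rfl

/-- The event that the observed data follow `(lbar, a^d)` through time `t`. -/
def Sset (M : Model 𝓐 𝓛 Ω) (d : Policy 𝓐 𝓛) (abar : ∀ s : Fin τ, 𝓐 s)
    (lbar : ∀ s : Fin τ, 𝓛 s) (t : Fin τ) : Set Ω :=
  {ω | ∀ s : Fin τ, s ≤ t → (M.L s ω = lbar s ∧ M.A s ω = adSeq d abar lbar s)}

lemma condEvent_eq (M : Model 𝓐 𝓛 Ω) (d : Policy 𝓐 𝓛) (abar : ∀ s : Fin τ, 𝓐 s)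
    (lbar : ∀ s : Fin τ, 𝓛 s) (t : Fin τ) :
    M.condEvent t (adSeq d abar lbar t) (hdOf d abar lbar t) = Sset M d abar lbar t := by
  ext ω
  simp only [Model.condEvent, Model.histEvent, Model.Hproc, hdOf, Sset, Set.mem_inter_iff,
    Set.mem_setOf_eq, Prod.mk.injEq, funext_iff]
  constructor
  · rintro ⟨hAt, hLs, hAs⟩ s hs
    refine ⟨hLs ⟨s, hs⟩, ?_⟩
    rcases eq_or_lt_of_le hs with h | h
    · subst h; exact hAt
    · exact hAs ⟨s, h⟩
  · intro h
    exact ⟨(h t le_rfl).2, ⟨fun s => (h s.1 s.2).1, fun s => (h s.1 (le_of_lt s.2)).2⟩⟩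

lemma Sset_meas (M : Model 𝓐 𝓛 Ω) (hmeas : M.Meas) (d : Policy 𝓐 𝓛)
    (abar : ∀ s : Fin τ, 𝓐 s) (lbar : ∀ s : Fin τ, 𝓛 s) (t : Fin τ) :
    MeasurableSet (Sset M d abar lbar t) := by
  have : Sset M d abar lbar t =
      ⋂ s : Fin τ, ⋂ (_ : s ≤ t),
        ({ω | M.L s ω = lbar s} ∩ {ω | M.A s ω = adSeq d abar lbar s}) := by
    ext ω
    simp only [Sset, Set.mem_setOf_eq, Set.mem_iInter, Set.mem_inter_iff]
  rw [this]
  exact MeasurableSet.iInter fun s => MeasurableSet.iInter fun _ =>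
    (hmeas.2.1 s _).inter (hmeas.1 s _)

lemma setIntegral_comp_fiber {ι : Type} [Fintype ι] (μ : Measure Ω)
    [IsFiniteMeasure μ] (T : Ω → ι) (hT : ∀ i, MeasurableSet {ω | T ω = i})
    (f : ι → ℝ) (S : Set Ω) :
    ∫ ω in S, f (T ω) ∂μ = ∑ i, f i * (μ (S ∩ {ω | T ω = i})).toReal := by
  have hrep : ∀ ω, f (T ω) = ∑ i, Set.indicator {ω' | T ω' = i} (fun _ => f i) ω := by
    intro ω
    rw [Finset.sum_eq_single (T ω)]
    · exact (Set.indicator_of_mem (show T ω = T ω from rfl) _).symm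
    · intro i _ hi
      exact Set.indicator_of_notMem (fun h => hi (Eq.symm h)) _
    · intro h; exact absurd (mem_univ _) h
  simp_rw [hrep]
  rw [integral_finset_sum]
  · refine Finset.sum_congr rfl fun i _ => ?_
    rw [setIntegral_indicator (hT i), setIntegral_const, smul_eq_mul, mul_comm]
    rfl
  · intro i _
    exact (integrable_const (f i)).indicator (hT i)

lemma snoc_eq_sbOf (t' : Fin τ) (sb : SbarN 𝓐 t'.val) (a : 𝓐 t') (ab : ∀ s : Fin τ, 𝓐 s)
    (hsb : ∀ s : {s : Fin τ // s.val < t'.val}, sb s = ab s.1) :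
    snoc sb a = sbOf (Function.update ab t' a) (t'.val + 1) := by
  funext s
  rcases s with ⟨s, hs⟩
  by_cases h : s = t'
  · subst h
    simp only [snoc, dif_pos rfl, sbOf, Function.update_self]
    rfl
  · simp only [snoc, dif_neg h, sbOf]
    rw [hsb _, Function.update_of_ne h]

lemma Hproc_eq_hd (M : Model 𝓐 𝓛 Ω) (d : Policy 𝓐 𝓛) (ab : ∀ s : Fin τ, 𝓐 s)
    (lb : ∀ s : Fin τ, 𝓛 s) (t' : Fin τ) (ω : Ω)
    (hL : ∀ s : Fin τ, s ≤ t' → M.L s ω = lb s)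
    (hA : ∀ s : Fin τ, s < t' → M.A s ω = adSeq d ab lb s) :
    M.Hproc t' ω = hdOf d ab lb t' := by
  unfold Model.Hproc hdOf
  simp only [Prod.mk.injEq]
  exact ⟨funext fun s => hL s.1 s.2, funext fun s => hA s.1 s.2⟩

lemma qOf_eval (M : Model 𝓐 𝓛 Ω) (d : Policy 𝓐 𝓛)
    (m : ∀ t : Fin τ, SbarN 𝓐 (t.val + 1) → 𝓐 t → Hist 𝓐 𝓛 t → ℝ)
    (t' : Fin τ) (sb : SbarN 𝓐 t'.val) (ab₀ : ∀ s : Fin τ, 𝓐 s) (lb₀ : ∀ s : Fin τ, 𝓛 s)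
    (ω : Ω)
    (hsb : ∀ s : {s : Fin τ // s.val < t'.val}, sb s = ab₀ s.1)
    (hL : ∀ s : Fin τ, s < t' → M.L s ω = lb₀ s)
    (hA : ∀ s : Fin τ, s < t' → M.A s ω = adSeq d ab₀ lb₀ s) :
    qOf d m t' sb (M.A t' ω) (M.Hproc t' ω)
      = m t' (sbOf (Function.update ab₀ t' (M.A t' ω)) (t'.val + 1))
          (adSeq d (Function.update ab₀ t' (M.A t' ω))
            (Function.update lb₀ t' (M.L t' ω)) t')
          (hdOf d (Function.update ab₀ t' (M.A t' ω))
            (Function.update lb₀ t' (M.L t' ω)) t') := by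
  set ab' := Function.update ab₀ t' (M.A t' ω) with hab'
  set lb' := Function.update lb₀ t' (M.L t' ω) with hlb'
  have hupA : ∀ s : Fin τ, s < t' → ab' s = ab₀ s := fun s hs =>
    Function.update_of_ne (ne_of_lt hs) _ _
  have hupL : ∀ s : Fin τ, s < t' → lb' s = lb₀ s := fun s hs =>
    Function.update_of_ne (ne_of_lt hs) _ _
  have hAd : ∀ s : Fin τ, s < t' → adSeq d ab₀ lb₀ s = adSeq d ab' lb' s := fun s hs =>
    adSeq_congr d _ _ _ _ s (fun u hu => (hupA u (lt_of_le_of_lt hu hs)).symm)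
      (fun u hu => (hupL u (lt_of_le_of_lt hu hs)).symm)
  have hβ : M.Hproc t' ω = hdOf d ab' lb' t' := by
    apply Hproc_eq_hd
    · intro s hs
      rcases eq_or_lt_of_le hs with h | h
      · subst h
        rw [hlb', Function.update_self]
      · rw [hupL s h]; exact hL s h
    · intro s hs
      rw [← hAd s hs]; exact hA s hs
  have hα : snoc sb (M.A t' ω) = sbOf ab' (t'.val + 1) := snoc_eq_sbOf t' sb _ ab₀ hsb
  unfold qOf
  rw [hα, hβ, ← adSeq_eq d ab' lb' t']

/-- The factor of the g-computation formula. -/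
noncomputable def fac (M : Model 𝓐 𝓛 Ω) (d : Policy 𝓐 𝓛)
    (ab : ∀ s : Fin τ, 𝓐 s) (lb : ∀ s : Fin τ, 𝓛 s) (k : Fin τ) : ℝ :=
  (M.μ {ω | (∀ s : Fin τ, s < k → (M.L s ω = lb s ∧ M.A s ω = adSeq d ab lb s)) ∧
        M.A k ω = ab k ∧ M.L k ω = lb k}).toReal /
  (M.μ {ω | ∀ s : Fin τ, s < k → (M.L s ω = lb s ∧ M.A s ω = adSeq d ab lb s)}).toReal

/-- The outcome regression of the g-computation formula. -/
noncomputable def fBig (M : Model 𝓐 𝓛 Ω) (d : Policy 𝓐 𝓛)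
    (ab : ∀ s : Fin τ, 𝓐 s) (lb : ∀ s : Fin τ, 𝓛 s) : ℝ :=
  condExpOn M.μ
    {ω | (∀ s : Fin τ, M.L s ω = lb s) ∧ (∀ s : Fin τ, M.A s ω = adSeq d ab lb s)} M.Y

lemma gcomp_eq (M : Model 𝓐 𝓛 Ω) (d : Policy 𝓐 𝓛) :
    gcomp M d = ∑ ab : ∀ s : Fin τ, 𝓐 s, ∑ lb : ∀ s : Fin τ, 𝓛 s,
      fBig M d ab lb * ∏ k : Fin τ, fac M d ab lb k := rfl

lemma fac_congr (M : Model 𝓐 𝓛 Ω) (d : Policy 𝓐 𝓛)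
    (ab ab' : ∀ s : Fin τ, 𝓐 s) (lb lb' : ∀ s : Fin τ, 𝓛 s) (k : Fin τ)
    (hA : ∀ s : Fin τ, s ≤ k → ab s = ab' s) (hL : ∀ s : Fin τ, s ≤ k → lb s = lb' s) :
    fac M d ab lb k = fac M d ab' lb' k := by
  have key : ∀ s : Fin τ, s < k →
      (lb s = lb' s ∧ adSeq d ab lb s = adSeq d ab' lb' s) := fun s hs =>
    ⟨hL s hs.le, adSeq_congr d _ _ _ _ s (fun u hu => hA u (hu.trans hs.le))
      (fun u hu => hL u (hu.trans hs.le))⟩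
  have hpre : ∀ ω : Ω,
      (∀ s : Fin τ, s < k → (M.L s ω = lb s ∧ M.A s ω = adSeq d ab lb s))
        ↔ (∀ s : Fin τ, s < k → (M.L s ω = lb' s ∧ M.A s ω = adSeq d ab' lb' s)) := by
    intro ω
    refine forall₂_congr fun s hs => ?_
    rw [(key s hs).1, (key s hs).2]
  have e1 : {ω | (∀ s : Fin τ, s < k → (M.L s ω = lb s ∧ M.A s ω = adSeq d ab lb s)) ∧
        M.A k ω = ab k ∧ M.L k ω = lb k}
      = {ω | (∀ s : Fin τ, s < k → (M.L s ω = lb' s ∧ M.A s ω = adSeq d ab' lb' s)) ∧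
        M.A k ω = ab' k ∧ M.L k ω = lb' k} := by
    ext ω
    simp only [Set.mem_setOf_eq]
    rw [hpre ω, hA k le_rfl, hL k le_rfl]
  have e2 : {ω | ∀ s : Fin τ, s < k → (M.L s ω = lb s ∧ M.A s ω = adSeq d ab lb s)}
      = {ω | ∀ s : Fin τ, s < k → (M.L s ω = lb' s ∧ M.A s ω = adSeq d ab' lb' s)} := by
    ext ω
    simp only [Set.mem_setOf_eq]
    exact hpre ω
  unfold fac
  rw [e1, e2]

lemma fac_upd (M : Model 𝓐 𝓛 Ω) (d : Policy 𝓐 𝓛) (abar : ∀ s : Fin τ, 𝓐 s)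
    (lbar : ∀ s : Fin τ, 𝓛 s) (t t' : Fin τ) (ht' : t'.val = t.val + 1)
    (a : 𝓐 t') (l : 𝓛 t') :
    fac M d (Function.update abar t' a) (Function.update lbar t' l) t'
      = (M.μ (Sset M d abar lbar t ∩ {ω | (M.A t' ω, M.L t' ω) = (a, l)})).toReal /
        (M.μ (Sset M d abar lbar t)).toReal := by
  have hlt : ∀ s : Fin τ, s < t' ↔ s ≤ t := fun s => by
    rw [Fin.lt_def, Fin.le_def, ht']; exact Nat.lt_succ_iff
  have hne : ∀ s : Fin τ, s ≤ t → s ≠ t' := by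
    intro s hs h
    subst h
    rw [Fin.le_def] at hs
    omega
  have hupA : ∀ s : Fin τ, s ≤ t → Function.update abar t' a s = abar s := fun s hs =>
    Function.update_of_ne (hne s hs) _ _
  have hupL : ∀ s : Fin τ, s ≤ t → Function.update lbar t' l s = lbar s := fun s hs =>
    Function.update_of_ne (hne s hs) _ _
  have hAd : ∀ s : Fin τ, s ≤ t →
      adSeq d (Function.update abar t' a) (Function.update lbar t' l) s
        = adSeq d abar lbar s := fun s hs =>
    adSeq_congr d _ _ _ _ s (fun u hu => hupA u (hu.trans hs)) (fun u hu => hupL u (hu.trans hs))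
  have hpre : ∀ ω : Ω,
      (∀ s : Fin τ, s < t' → (M.L s ω = Function.update lbar t' l s ∧
          M.A s ω = adSeq d (Function.update abar t' a) (Function.update lbar t' l) s))
        ↔ ω ∈ Sset M d abar lbar t := by
    intro ω
    constructor
    · intro h s hs
      have := h s ((hlt s).mpr hs)
      rwa [hupL s hs, hAd s hs] at this
    · intro h s hs
      have := h s ((hlt s).mp hs)
      rwa [← hupL s ((hlt s).mp hs), ← hAd s ((hlt s).mp hs)] at this
  have e2 : {ω | ∀ s : Fin τ, s < t' → (M.L s ω = Function.update lbar t' l s ∧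
        M.A s ω = adSeq d (Function.update abar t' a) (Function.update lbar t' l) s)}
      = Sset M d abar lbar t := by
    ext ω
    simp only [Set.mem_setOf_eq]
    exact hpre ω
  have e1 : {ω | (∀ s : Fin τ, s < t' → (M.L s ω = Function.update lbar t' l s ∧
        M.A s ω = adSeq d (Function.update abar t' a) (Function.update lbar t' l) s)) ∧
        M.A t' ω = Function.update abar t' a t' ∧
        M.L t' ω = Function.update lbar t' l t'}
      = Sset M d abar lbar t ∩ {ω | (M.A t' ω, M.L t' ω) = (a, l)} := by
    ext ω
    simp only [Set.mem_setOf_eq, Set.mem_inter_iff, Function.update_self, Prod.mk.injEq]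
    rw [hpre ω]
  unfold fac
  rw [e1, e2]

lemma prod_split_succ (f : Fin τ → ℝ) (t t' : Fin τ) (ht' : t'.val = t.val + 1) :
    (∏ k : Fin τ, if t < k then f k else 1)
      = f t' * ∏ k : Fin τ, (if t' < k then f k else 1) := by
  have h1 : (∏ k : Fin τ, if t < k then f k else 1)
      = (if t < t' then f t' else 1) *
          ∏ k ∈ Finset.univ.erase t', (if t < k then f k else 1) :=
    (Finset.mul_prod_erase _ _ (mem_univ t')).symm
  have h2 : (∏ k : Fin τ, if t' < k then f k else 1)
      = (if t' < t' then f t' else 1) *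
          ∏ k ∈ Finset.univ.erase t', (if t' < k then f k else 1) :=
    (Finset.mul_prod_erase _ _ (mem_univ t')).symm
  rw [h1, h2, if_pos (show t < t' by rw [Fin.lt_def, ht']; omega),
    if_neg (lt_irrefl t'), one_mul]
  congr 1
  refine Finset.prod_congr rfl fun k hk => ?_
  have hk2 : k.val ≠ t'.val := fun h => (Finset.mem_erase.mp hk).1 (Fin.ext h)
  by_cases h : t' < k
  · rw [Fin.lt_def] at h
    rw [if_pos (Fin.lt_def.mpr h), if_pos (by rw [Fin.lt_def]; omega)]
  · rw [Fin.lt_def] at h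
    rw [if_neg (fun hc => h (by rw [Fin.lt_def] at hc; omega)),
      if_neg (fun hc => h (by rw [Fin.lt_def] at hc; omega))]

lemma prod_split_zero (f : Fin τ → ℝ) (t0 : Fin τ) (h0 : t0.val = 0) :
    (∏ k : Fin τ, f k) = f t0 * ∏ k : Fin τ, (if t0 < k then f k else 1) := by
  have h1 : (∏ k : Fin τ, f k) = f t0 * ∏ k ∈ Finset.univ.erase t0, f k :=
    (Finset.mul_prod_erase _ _ (mem_univ t0)).symm
  have h2 : (∏ k : Fin τ, if t0 < k then f k else 1)
      = (if t0 < t0 then f t0 else 1) *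
          ∏ k ∈ Finset.univ.erase t0, (if t0 < k then f k else 1) :=
    (Finset.mul_prod_erase _ _ (mem_univ t0)).symm
  rw [h1, h2, if_neg (lt_irrefl t0), one_mul]
  congr 1
  refine Finset.prod_congr rfl fun k hk => ?_
  have hk2 : k.val ≠ t0.val := fun h => (Finset.mem_erase.mp hk).1 (Fin.ext h)
  rw [if_pos (by rw [Fin.lt_def]; omega)]

/-- The partial g-computation sum appearing in the backward induction. -/
noncomputable def claimRHS (M : Model 𝓐 𝓛 Ω) (d : Policy 𝓐 𝓛) (t : Fin τ)
    (abar : ∀ s : Fin τ, 𝓐 s) (lbar : ∀ s : Fin τ, 𝓛 s) : ℝ :=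
  ∑ ab : ∀ s : Fin τ, 𝓐 s, ∑ lb : ∀ s : Fin τ, 𝓛 s,
    if (∀ s : Fin τ, s ≤ t → (ab s = abar s ∧ lb s = lbar s)) then
      fBig M d ab lb * ∏ k : Fin τ, (if t < k then fac M d ab lb k else 1)
    else 0

lemma claimRHS_step (M : Model 𝓐 𝓛 Ω) (d : Policy 𝓐 𝓛) (t t' : Fin τ)
    (ht' : t'.val = t.val + 1) (abar : ∀ s : Fin τ, 𝓐 s) (lbar : ∀ s : Fin τ, 𝓛 s) :
    claimRHS M d t abar lbar
      = ∑ p : 𝓐 t' × 𝓛 t',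
          ((M.μ (Sset M d abar lbar t ∩ {ω | (M.A t' ω, M.L t' ω) = p})).toReal /
              (M.μ (Sset M d abar lbar t)).toReal) *
            claimRHS M d t' (Function.update abar t' p.1) (Function.update lbar t' p.2) := by
  have hcond : ∀ (ab : ∀ s : Fin τ, 𝓐 s) (lb : ∀ s : Fin τ, 𝓛 s) (p : 𝓐 t' × 𝓛 t'),
      (∀ s : Fin τ, s ≤ t' → (ab s = Function.update abar t' p.1 s ∧
          lb s = Function.update lbar t' p.2 s))
        ↔ ((ab t', lb t') = p ∧
            ∀ s : Fin τ, s ≤ t → (ab s = abar s ∧ lb s = lbar s)) := by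
    intro ab lb p
    constructor
    · intro h
      refine ⟨?_, fun s hs => ?_⟩
      · have := h t' le_rfl
        rw [Function.update_self, Function.update_self] at this
        exact Prod.ext_iff.mpr ⟨this.1, this.2⟩
      · have hs' : s ≤ t' := le_trans hs (by rw [Fin.le_def, ht']; omega)
        have hne : s ≠ t' := by
          intro h'
          subst h'
          rw [Fin.le_def] at hs
          omega
        have := h s hs'
        rwa [Function.update_of_ne hne, Function.update_of_ne hne] at this
    · rintro ⟨hp, h⟩ s hs
      by_cases hne : s = t'
      · subst hne
        rw [Function.update_self, Function.update_self]
        exact ⟨congrArg Prod.fst hp, congrArg Prod.snd hp⟩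
      · have hst : s ≤ t := by
          rw [Fin.le_def] at hs ⊢
          have : s.val ≠ t'.val := fun hh => hne (Fin.ext hh)
          omega
        rw [Function.update_of_ne hne, Function.update_of_ne hne]
        exact h s hst
  calc claimRHS M d t abar lbar
      = ∑ ab : ∀ s : Fin τ, 𝓐 s, ∑ lb : ∀ s : Fin τ, 𝓛 s, ∑ p : 𝓐 t' × 𝓛 t',
          if (∀ s : Fin τ, s ≤ t' → (ab s = Function.update abar t' p.1 s ∧
              lb s = Function.update lbar t' p.2 s)) then
            ((M.μ (Sset M d abar lbar t ∩ {ω | (M.A t' ω, M.L t' ω) = p})).toReal /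
                (M.μ (Sset M d abar lbar t)).toReal) *
              (fBig M d ab lb * ∏ k : Fin τ, (if t' < k then fac M d ab lb k else 1))
          else 0 := by
        unfold claimRHS
        refine Finset.sum_congr rfl fun ab _ => Finset.sum_congr rfl fun lb _ => ?_
        rw [Finset.sum_eq_single ((ab t', lb t'))]
        · by_cases hc : ∀ s : Fin τ, s ≤ t → (ab s = abar s ∧ lb s = lbar s)
          · rw [if_pos hc, if_pos ((hcond ab lb _).mpr ⟨rfl, hc⟩)]
            have hagree : ∀ s : Fin τ, s ≤ t' →
                (ab s = Function.update abar t' (ab t') s ∧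
                  lb s = Function.update lbar t' (lb t') s) :=
              (hcond ab lb (ab t', lb t')).mpr ⟨rfl, hc⟩
            have hfa : fac M d ab lb t'
                = (M.μ (Sset M d abar lbar t ∩
                      {ω | (M.A t' ω, M.L t' ω) = (ab t', lb t')})).toReal /
                    (M.μ (Sset M d abar lbar t)).toReal := by
              rw [fac_congr M d ab (Function.update abar t' (ab t')) lb
                (Function.update lbar t' (lb t')) t'
                (fun s hs => (hagree s hs).1) (fun s hs => (hagree s hs).2)]
              exact fac_upd M d abar lbar t t' ht' (ab t') (lb t')
            rw [prod_split_succ (fac M d ab lb) t t' ht', hfa]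
            ring
          · rw [if_neg hc, if_neg (fun h => hc ((hcond ab lb _).mp h).2)]
        · intro p _ hp
          exact if_neg (fun h => hp (Eq.symm (((hcond ab lb p).mp h).1)))
        · intro h; exact absurd (mem_univ _) h
    _ = _ := by
        refine (Finset.sum_congr rfl fun ab _ => Finset.sum_comm).trans
          (Finset.sum_comm.trans ?_)
        refine Finset.sum_congr rfl fun p _ => ?_
        unfold claimRHS
        rw [Finset.mul_sum]
        refine Finset.sum_congr rfl fun ab _ => ?_
        rw [Finset.mul_sum]
        refine Finset.sum_congr rfl fun lb _ => ?_
        rw [mul_ite, mul_zero]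

lemma claim (M : Model 𝓐 𝓛 Ω) [IsProbabilityMeasure M.μ] (hmeas : M.Meas)
    (d : Policy 𝓐 𝓛) (m : ∀ t : Fin τ, SbarN 𝓐 (t.val + 1) → 𝓐 t → Hist 𝓐 𝓛 t → ℝ)
    (hm : IsSeqReg M d m) (t : Fin τ) (abar : ∀ s : Fin τ, 𝓐 s) (lbar : ∀ s : Fin τ, 𝓛 s) :
    m t (sbOf abar (t.val + 1)) (adSeq d abar lbar t) (hdOf d abar lbar t)
      = claimRHS M d t abar lbar := by
  rw [hm t (sbOf abar (t.val + 1)) (adSeq d abar lbar t) (hdOf d abar lbar t),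
    condEvent_eq M d abar lbar t]
  by_cases h1 : t.val + 1 < τ
  · have hq : Set.EqOn (M.qNext (qOf d m) t (sbOf abar (t.val + 1)))
        (fun ω => (fun p : 𝓐 (⟨t.val + 1, h1⟩ : Fin τ) × 𝓛 (⟨t.val + 1, h1⟩ : Fin τ) =>
            claimRHS M d ⟨t.val + 1, h1⟩
              (Function.update abar ⟨t.val + 1, h1⟩ p.1)
              (Function.update lbar ⟨t.val + 1, h1⟩ p.2))
          (M.A ⟨t.val + 1, h1⟩ ω, M.L ⟨t.val + 1, h1⟩ ω))
        (Sset M d abar lbar t) := by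
      intro ω hω
      have hle : ∀ s : Fin τ, s < (⟨t.val + 1, h1⟩ : Fin τ) → s ≤ t := fun s hs => by
        rw [Fin.lt_def] at hs
        rw [Fin.le_def]
        exact Nat.lt_succ_iff.mp hs
      show M.qNext (qOf d m) t (sbOf abar (t.val + 1)) ω = _
      unfold Model.qNext
      rw [dif_pos h1]
      rw [qOf_eval M d m ⟨t.val + 1, h1⟩ (sbOf abar (t.val + 1)) abar lbar ω
        (fun s => rfl)
        (fun s hs => (hω s (hle s hs)).1)
        (fun s hs => (hω s (hle s hs)).2)]
      exact claim M hmeas d m hm ⟨t.val + 1, h1⟩ _ _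
    have hT : ∀ p : 𝓐 (⟨t.val + 1, h1⟩ : Fin τ) × 𝓛 (⟨t.val + 1, h1⟩ : Fin τ),
        MeasurableSet {ω | (M.A ⟨t.val + 1, h1⟩ ω, M.L ⟨t.val + 1, h1⟩ ω) = p} := by
      rintro ⟨a, l⟩
      have : {ω | (M.A ⟨t.val + 1, h1⟩ ω, M.L ⟨t.val + 1, h1⟩ ω) = (a, l)}
          = {ω | M.A ⟨t.val + 1, h1⟩ ω = a} ∩ {ω | M.L ⟨t.val + 1, h1⟩ ω = l} := by
        ext ω
        simp only [Set.mem_setOf_eq, Set.mem_inter_iff, Prod.mk.injEq]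
      rw [this]
      exact (hmeas.1 _ a).inter (hmeas.2.1 _ l)
    unfold condExpOn
    rw [setIntegral_congr_fun (Sset_meas M hmeas d abar lbar t) hq]
    rw [setIntegral_comp_fiber M.μ
      (fun ω => (M.A ⟨t.val + 1, h1⟩ ω, M.L ⟨t.val + 1, h1⟩ ω)) hT
      (fun p => claimRHS M d ⟨t.val + 1, h1⟩
        (Function.update abar ⟨t.val + 1, h1⟩ p.1)
        (Function.update lbar ⟨t.val + 1, h1⟩ p.2))
      (Sset M d abar lbar t)]
    rw [claimRHS_step M d t ⟨t.val + 1, h1⟩ rfl abar lbar, Finset.sum_div]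
    refine Finset.sum_congr rfl fun p _ => ?_
    ring
  · have hle : ∀ s : Fin τ, s ≤ t := fun s => by
      rw [Fin.le_def]
      have := s.isLt
      omega
    have hYeq : M.qNext (qOf d m) t (sbOf abar (t.val + 1)) = M.Y := by
      funext ω
      unfold Model.qNext
      rw [dif_neg h1]
    have hS : Sset M d abar lbar t
        = {ω | (∀ s : Fin τ, M.L s ω = lbar s) ∧
            (∀ s : Fin τ, M.A s ω = adSeq d abar lbar s)} := by
      ext ω
      simp only [Sset, Set.mem_setOf_eq]
      exact ⟨fun h => ⟨fun s => (h s (hle s)).1, fun s => (h s (hle s)).2⟩,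
        fun h s _ => ⟨h.1 s, h.2 s⟩⟩
    have hRHS : claimRHS M d t abar lbar = fBig M d abar lbar := by
      unfold claimRHS
      rw [Finset.sum_eq_single abar
        (fun ab _ hab => Finset.sum_eq_zero fun lb _ =>
          if_neg (fun h => hab (funext fun s => (h s (hle s)).1)))
        (fun h => absurd (mem_univ _) h),
        Finset.sum_eq_single lbar
          (fun lb _ hlb => if_neg fun h => hlb (funext fun s => (h s (hle s)).2))
          (fun h => absurd (mem_univ _) h),
        if_pos (fun s _ => ⟨rfl, rfl⟩),
        Finset.prod_eq_one (fun k _ => if_neg (by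
          have hk := hle k
          rw [Fin.le_def] at hk
          rw [Fin.lt_def]
          omega)), mul_one]
    rw [hYeq, hS, hRHS]
    rfl
termination_by τ - t.val
decreasing_by simp_wf; omega

end SeqRegProof

/-- **Sequential regression representation of the g-computation formula**
(Proposition 1 of the paper): `θ = E[q_1(A_1, H_1)]`, where `q_1` is the first function
produced by the sequential regression recursion. -/
theorem sequential_regression_representation
    [∀ t, Nonempty (𝓐 t)] [∀ t, Fintype (𝓛 t)] [∀ t, Nonempty (𝓛 t)]
    (hτ : 0 < τ)
    (M : Model 𝓐 𝓛 Ω) [IsProbabilityMeasure M.μ]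
    (hmeas : M.Meas) (hbdd : ∃ C, ∀ ω, |M.Y ω| ≤ C)
    (hpos : M.Positivity)
    (d : Policy 𝓐 𝓛)
    (m : ∀ t : Fin τ, SbarN 𝓐 (t.val + 1) → 𝓐 t → Hist 𝓐 𝓛 t → ℝ)
    (hm : IsSeqReg M d m) :
    gcomp M d = theta hτ M d m := by
  classical
  have hT : ∀ p : 𝓐 (⟨0, hτ⟩ : Fin τ) × 𝓛 (⟨0, hτ⟩ : Fin τ),
      MeasurableSet {ω | (M.A ⟨0, hτ⟩ ω, M.L ⟨0, hτ⟩ ω) = p} := by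
    rintro ⟨a, l⟩
    have : {ω | (M.A ⟨0, hτ⟩ ω, M.L ⟨0, hτ⟩ ω) = (a, l)}
        = {ω | M.A ⟨0, hτ⟩ ω = a} ∩ {ω | M.L ⟨0, hτ⟩ ω = l} := by
      ext ω
      simp only [Set.mem_setOf_eq, Set.mem_inter_iff, Prod.mk.injEq]
    rw [this]
    exact (hmeas.1 _ a).inter (hmeas.2.1 _ l)
  set a0 : ∀ s : Fin τ, 𝓐 s := fun s => Classical.arbitrary _ with ha0
  set l0 : ∀ s : Fin τ, 𝓛 s := fun s => Classical.arbitrary _ with hl0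
  have hvac : ∀ s : Fin τ, ¬ (s < (⟨0, hτ⟩ : Fin τ)) := fun s hs =>
    Nat.not_lt_zero s.val (Fin.lt_def.mp hs)
  have hθ : theta hτ M d m = ∑ p : 𝓐 (⟨0, hτ⟩ : Fin τ) × 𝓛 (⟨0, hτ⟩ : Fin τ),
      claimRHS M d ⟨0, hτ⟩ (Function.update a0 ⟨0, hτ⟩ p.1)
          (Function.update l0 ⟨0, hτ⟩ p.2) *
        (M.μ (Set.univ ∩ {ω | (M.A ⟨0, hτ⟩ ω, M.L ⟨0, hτ⟩ ω) = p})).toReal := by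
    unfold theta
    have hpt : ∀ ω : Ω, qOf d m ⟨0, hτ⟩ (emptySbar 𝓐) (M.A ⟨0, hτ⟩ ω) (M.Hproc ⟨0, hτ⟩ ω)
        = (fun p : 𝓐 (⟨0, hτ⟩ : Fin τ) × 𝓛 (⟨0, hτ⟩ : Fin τ) => claimRHS M d ⟨0, hτ⟩
            (Function.update a0 ⟨0, hτ⟩ p.1) (Function.update l0 ⟨0, hτ⟩ p.2))
          ((fun ω => (M.A ⟨0, hτ⟩ ω, M.L ⟨0, hτ⟩ ω)) ω) := by
      intro ω
      rw [qOf_eval M d m ⟨0, hτ⟩ (emptySbar 𝓐) a0 l0 ω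
        (fun s => absurd s.2 (Nat.not_lt_zero _))
        (fun s hs => absurd hs (hvac s))
        (fun s hs => absurd hs (hvac s))]
      exact claim M hmeas d m hm ⟨0, hτ⟩ _ _
    rw [← setIntegral_univ]
    rw [setIntegral_congr_fun MeasurableSet.univ (fun ω _ => hpt ω)]
    exact setIntegral_comp_fiber M.μ (fun ω => (M.A ⟨0, hτ⟩ ω, M.L ⟨0, hτ⟩ ω)) hT
      (fun p => claimRHS M d ⟨0, hτ⟩ (Function.update a0 ⟨0, hτ⟩ p.1)
        (Function.update l0 ⟨0, hτ⟩ p.2)) Set.univ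
  have hcond0 : ∀ (ab : ∀ s : Fin τ, 𝓐 s) (lb : ∀ s : Fin τ, 𝓛 s)
      (p : 𝓐 (⟨0, hτ⟩ : Fin τ) × 𝓛 (⟨0, hτ⟩ : Fin τ)),
      ((ab ⟨0, hτ⟩, lb ⟨0, hτ⟩) = p) ↔
        (∀ s : Fin τ, s ≤ (⟨0, hτ⟩ : Fin τ) →
          (ab s = Function.update a0 ⟨0, hτ⟩ p.1 s ∧
            lb s = Function.update l0 ⟨0, hτ⟩ p.2 s)) := by
    intro ab lb p
    constructor
    · intro hp s hs
      have hseq : s = (⟨0, hτ⟩ : Fin τ) := Fin.ext (Nat.le_zero.mp (Fin.le_def.mp hs))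
      subst hseq
      rw [Function.update_self, Function.update_self]
      exact ⟨congrArg Prod.fst hp, congrArg Prod.snd hp⟩
    · intro h
      have := h ⟨0, hτ⟩ le_rfl
      rw [Function.update_self, Function.update_self] at this
      exact Prod.ext_iff.mpr ⟨this.1, this.2⟩
  have fac0 : ∀ (ab : ∀ s : Fin τ, 𝓐 s) (lb : ∀ s : Fin τ, 𝓛 s),
      fac M d ab lb ⟨0, hτ⟩
        = (M.μ (Set.univ ∩
            {ω | (M.A ⟨0, hτ⟩ ω, M.L ⟨0, hτ⟩ ω) = (ab ⟨0, hτ⟩, lb ⟨0, hτ⟩)})).toReal := by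
    intro ab lb
    have hden : {ω : Ω | ∀ s : Fin τ, s < (⟨0, hτ⟩ : Fin τ) →
          (M.L s ω = lb s ∧ M.A s ω = adSeq d ab lb s)} = Set.univ := by
      ext ω
      simp only [Set.mem_setOf_eq, Set.mem_univ, iff_true]
      exact fun s hs => absurd hs (hvac s)
    have hnum : {ω : Ω | (∀ s : Fin τ, s < (⟨0, hτ⟩ : Fin τ) →
          (M.L s ω = lb s ∧ M.A s ω = adSeq d ab lb s)) ∧
          M.A ⟨0, hτ⟩ ω = ab ⟨0, hτ⟩ ∧ M.L ⟨0, hτ⟩ ω = lb ⟨0, hτ⟩}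
        = Set.univ ∩
            {ω | (M.A ⟨0, hτ⟩ ω, M.L ⟨0, hτ⟩ ω) = (ab ⟨0, hτ⟩, lb ⟨0, hτ⟩)} := by
      ext ω
      simp only [Set.mem_setOf_eq, Set.mem_inter_iff, Set.mem_univ, true_and, Prod.mk.injEq]
      constructor
      · rintro ⟨-, h2, h3⟩; exact ⟨h2, h3⟩
      · rintro ⟨h2, h3⟩; exact ⟨fun s hs => absurd hs (hvac s), h2, h3⟩
    unfold fac
    rw [hden, hnum, measure_univ, ENNReal.toReal_one, div_one]
  have hg : gcomp M d = ∑ p : 𝓐 (⟨0, hτ⟩ : Fin τ) × 𝓛 (⟨0, hτ⟩ : Fin τ),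
      (M.μ (Set.univ ∩ {ω | (M.A ⟨0, hτ⟩ ω, M.L ⟨0, hτ⟩ ω) = p})).toReal *
        claimRHS M d ⟨0, hτ⟩ (Function.update a0 ⟨0, hτ⟩ p.1)
          (Function.update l0 ⟨0, hτ⟩ p.2) := by
    rw [gcomp_eq]
    calc (∑ ab : ∀ s : Fin τ, 𝓐 s, ∑ lb : ∀ s : Fin τ, 𝓛 s,
          fBig M d ab lb * ∏ k : Fin τ, fac M d ab lb k)
        = ∑ ab : ∀ s : Fin τ, 𝓐 s, ∑ lb : ∀ s : Fin τ, 𝓛 s,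
            ∑ p : 𝓐 (⟨0, hτ⟩ : Fin τ) × 𝓛 (⟨0, hτ⟩ : Fin τ),
            if (∀ s : Fin τ, s ≤ (⟨0, hτ⟩ : Fin τ) →
                (ab s = Function.update a0 ⟨0, hτ⟩ p.1 s ∧
                  lb s = Function.update l0 ⟨0, hτ⟩ p.2 s)) then
              (M.μ (Set.univ ∩ {ω | (M.A ⟨0, hτ⟩ ω, M.L ⟨0, hτ⟩ ω) = p})).toReal *
                (fBig M d ab lb *
                  ∏ k : Fin τ, (if (⟨0, hτ⟩ : Fin τ) < k then fac M d ab lb k else 1))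
            else 0 := by
          refine Finset.sum_congr rfl fun ab _ => Finset.sum_congr rfl fun lb _ => ?_
          rw [Finset.sum_eq_single ((ab ⟨0, hτ⟩, lb ⟨0, hτ⟩))]
          · rw [if_pos ((hcond0 ab lb _).mp rfl)]
            rw [prod_split_zero (fac M d ab lb) ⟨0, hτ⟩ rfl, fac0 ab lb]
            ring
          · intro p _ hp
            exact if_neg (fun h => hp (Eq.symm ((hcond0 ab lb p).mpr h)))
          · intro h; exact absurd (mem_univ _) h
      _ = _ := by
          refine (Finset.sum_congr rfl fun ab _ => Finset.sum_comm).trans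
            (Finset.sum_comm.trans ?_)
          refine Finset.sum_congr rfl fun p _ => ?_
          unfold claimRHS
          rw [Finset.mul_sum]
          refine Finset.sum_congr rfl fun ab _ => ?_
          rw [Finset.mul_sum]
          refine Finset.sum_congr rfl fun lb _ => ?_
          rw [mul_ite, mul_zero]
  rw [hg, hθ]
  exact Finset.sum_congr rfl fun p _ => mul_comm _ _

end GLMTP
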